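/- Let A be the free supercommutative superalgebra over ℚ on even generators x_1,…,x_n, u_1,…,u_n and odd generators θ_1,…,θ_n, e_1,…,e_n (so e_i = dx^i is odd and u_i = dθ_i is even). Let d : A → A be the odd derivation with d(x_i) = e_i, d(θ_i) = u_i, d(e_i) = 0, d(u_i) = 0, and let ω := Σ_i e_i u_i. Then for every f in the subalgebra generated by the x's and θ's, there exists α ∈ A such that d(f · e_1 e_2 ⋯ e_n) = ω · α; explicitly one may take α = (−1)^{|f|+1} Σ_{i=1}^n (∂_{θ_i} f) · ι_i(e_1⋯e_n), where ι_i is the odd derivation with ι_i(e_j) = δ_{ij}. -/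
import Mathlib


/-!
The free supercommutative superalgebra over `ℚ` on even generators `x_i` (coordinates),
even generators `u_i` (= `dθ_i`), odd generators `θ_i` and odd generators `e_i` (= `dx^i`)
is modeled as the free `ℚ`-module on the normally-ordered monomial basis
`(a, b, S, T) ↦ x^a u^b θ_S e_T` (indices of `S`, `T` in increasing order).

`dRham` is the de Rham differential, the odd derivation with `d x_i = e_i`, `d θ_i = u_i`,
`d e_i = 0`, `d u_i = 0`; on monomials:
`d (x^a u^b θ_S e_T) = ∑_{i∉T} a_i (-1)^{#S} (-1)^{#{j∈T | j<i}} x^{a-δᵢ} u^b θ_S e_{T∪i}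
  + ∑_{i∈S} (-1)^{#{j∈S | j<i}} x^a u^{b+δᵢ} θ_{S\i} e_T`.

`Wmul` is multiplication by the odd symplectic form `ω = ∑ i, e_i u_i`.

`AlphaOp` implements `f·(θ-monomial part) ↦ (-1)^{|f|+1} ∑ i (∂_{θ_i} f) ιᵢ(e_T)`, i.e. the
explicit primitive `α` of the statement, on monomials:
`(x^a u^b θ_S e_T) ↦ ∑_{i ∈ S∩T} (-1)^{#S+1}(-1)^{#{j∈S|j<i}}(-1)^{#{j∈T|j<i}}
  x^a u^b θ_{S\i} e_{T\i}`.

Statement: for every `f` in the subalgebra generated by the `x`'s and `θ`'s (i.e. every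
element supported on monomials with `b = 0` and, after multiplying by `e_1⋯e_n`, with
`T = univ`), `d (f · e_1⋯e_n)` is `ω`-exact, and explicitly equals `ω · α` with
`α = AlphaOp (f · e_1⋯e_n)`.
-/

noncomputable section

variable (n : ℕ)

/-- normally ordered monomial basis `x^a u^b θ_S e_T` -/
abbrev DBasis := (Fin n →₀ ℕ) × (Fin n →₀ ℕ) × Finset (Fin n) × Finset (Fin n)

/-- the free supercommutative superalgebra on even `x_i, u_i` and odd `θ_i, e_i` -/
abbrev DForms := DBasis n →₀ ℚ

/-- the Koszul sign `(-1)^{#{j ∈ S | j < i}}` -/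
def insSign (i : Fin n) (S : Finset (Fin n)) : ℚ :=
  (-1) ^ (S.filter (· < i)).card

/-- extend a map defined on basis monomials to a linear endomorphism -/
def ofBasis (f : DBasis n → DForms n) : DForms n →ₗ[ℚ] DForms n :=
  Finsupp.lsum ℕ fun b => LinearMap.smulRight (LinearMap.id : ℚ →ₗ[ℚ] ℚ) (f b)

/-- the de Rham differential `d` (`d x_i = e_i`, `d θ_i = u_i`, `d e_i = d u_i = 0`) -/
def dRham : DForms n →ₗ[ℚ] DForms n :=
  ofBasis n fun b =>
    (∑ i ∈ b.2.2.2ᶜ,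
      ((b.1 i : ℚ) * (-1) ^ b.2.2.1.card * insSign n i b.2.2.2) •
        Finsupp.single (b.1 - Finsupp.single i 1, b.2.1, b.2.2.1, insert i b.2.2.2) (1 : ℚ))
    + ∑ i ∈ b.2.2.1,
        insSign n i b.2.2.1 •
          Finsupp.single (b.1, b.2.1 + Finsupp.single i 1, b.2.2.1.erase i, b.2.2.2) (1 : ℚ)

/-- multiplication by the odd symplectic form `ω = ∑ i, e_i u_i` -/
def Wmul : DForms n →ₗ[ℚ] DForms n :=
  ofBasis n fun b => ∑ i ∈ b.2.2.2ᶜ,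
    ((-1 : ℚ) ^ b.2.2.1.card * insSign n i b.2.2.2) •
      Finsupp.single (b.1, b.2.1 + Finsupp.single i 1, b.2.2.1, insert i b.2.2.2) (1 : ℚ)

/-- the explicit primitive: `α = (-1)^{|f|+1} ∑ i, (∂_{θ_i} f) ιᵢ(e_T)` -/
def AlphaOp : DForms n →ₗ[ℚ] DForms n :=
  ofBasis n fun b => ∑ i ∈ b.2.2.1 ∩ b.2.2.2,
    ((-1 : ℚ) ^ (b.2.2.1.card + 1) * insSign n i b.2.2.1 * insSign n i b.2.2.2) •
      Finsupp.single (b.1, b.2.1, b.2.2.1.erase i, b.2.2.2.erase i) (1 : ℚ)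


lemma ofBasis_single (f : DBasis n → DForms n) (b : DBasis n) (c : ℚ) :
    ofBasis n f (Finsupp.single b c) = c • f b := by
  simp [ofBasis]

lemma insSign_erase (i : Fin n) (S : Finset (Fin n)) :
    insSign n i (S.erase i) = insSign n i S := by
  unfold insSign
  rw [Finset.filter_erase, Finset.erase_eq_of_notMem (by simp)]

lemma sign_lemma (i : Fin n) (S : Finset (Fin n)) (hi : i ∈ S) :
    (-1:ℚ)^((S.erase i).card) * insSign n i (Finset.univ.erase i)
      * ((-1:ℚ)^(S.card+1) * insSign n i S * insSign n i Finset.univ)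
      = insSign n i S := by
  rw [insSign_erase, Finset.card_erase_of_mem hi]
  have h1 : 1 ≤ S.card := Finset.card_pos.2 ⟨i, hi⟩
  unfold insSign
  rw [show S.card + 1 = S.card - 1 + 2 by omega]
  generalize (Finset.filter (· < i) Finset.univ).card = a
  generalize (Finset.filter (· < i) S).card = c
  generalize S.card - 1 = m
  simp only [← pow_add]
  rw [show m + a + (m + 2 + c + a) = c + 2*(a+m+1) by ring, pow_add, pow_mul]
  simp

lemma key (a : Fin n →₀ ℕ) (S : Finset (Fin n)) :
    dRham n (Finsupp.single ((a, 0, S, Finset.univ) : DBasis n) 1)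
      = Wmul n (AlphaOp n (Finsupp.single ((a, 0, S, Finset.univ) : DBasis n) 1)) := by
  rw [dRham, AlphaOp, ofBasis_single, ofBasis_single, one_smul, one_smul]
  simp only [Finset.compl_univ, Finset.sum_empty, zero_add, Finset.inter_univ]
  rw [map_sum]
  refine Finset.sum_congr rfl fun i hi => ?_
  rw [map_smul, Wmul, ofBasis_single]
  have hc : (Finset.univ.erase i)ᶜ = {i} := by
    rw [Finset.compl_erase, Finset.compl_univ]; simp
  simp only [hc, Finset.sum_singleton, Finset.insert_erase (Finset.mem_univ i),
    smul_smul]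
  rw [show ((0 : Fin n →₀ ℕ) + Finsupp.single i 1) = Finsupp.single i 1 by simp]
  congr 1
  linear_combination (-1 : ℚ) * sign_lemma n i S hi

/-- For `v = f · e_1⋯e_n` with `f` in the subalgebra generated by the `x`'s and `θ`'s,
`d v` is `ω`-exact; explicitly `d v = ω · (AlphaOp v)`. -/
theorem dRham_of_top_superform_is_omega_exact (v : DForms n)
    (hsupp : ∀ b ∈ v.support, b.2.1 = 0 ∧ b.2.2.2 = Finset.univ) :
    (∃ α : DForms n, dRham n v = Wmul n α)
    ∧ dRham n v = Wmul n (AlphaOp n v) := by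
  have main : dRham n v = Wmul n (AlphaOp n v) := by
    conv_lhs => rw [← Finsupp.sum_single v]
    conv_rhs => rw [← Finsupp.sum_single v]
    rw [map_finsuppSum, map_finsuppSum, map_finsuppSum, Finsupp.sum, Finsupp.sum]
    refine Finset.sum_congr rfl fun b hb => ?_
    obtain ⟨a, u, S, T⟩ := b
    obtain ⟨h1, h2⟩ := hsupp _ hb
    simp only at h1 h2
    subst h1 h2
    rw [show (Finsupp.single ((a, 0, S, Finset.univ) : DBasis n) (v (a, 0, S, Finset.univ)))
      = (v (a, 0, S, Finset.univ)) • Finsupp.single ((a, 0, S, Finset.univ) : DBasis n) 1 by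
        rw [Finsupp.smul_single, smul_eq_mul, mul_one]]
    rw [map_smul, map_smul, map_smul, key]
  exact ⟨⟨AlphaOp n v, main⟩, main⟩

end
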